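/- arXiv:1106.2458 — 2 statements merged into one kernel-verified Lean document; each statement's English description precedes it below -/
import Mathlib

section
/- Let A and B be two Young diagrams both lying in Y_n and both lying in Y_k for some k. Then there is an n-flip between A and B if and only if there is a k-flip between them. In particular, the existence of an m-flip between two diagrams is independent of m (for all m such that both diagrams lie in Y_m). -/
/-- `(a,b)` is a diagonal of the convex `n`-gon with vertices `0, …, n-1`. -/
def IsDiagonal (n a b : ℕ) : Prop :=
  a + 2 ≤ b ∧ b ≤ n - 1 ∧ ¬(a = 0 ∧ b = n - 1)

/-- Two diagonals (as ordered pairs, smaller endpoint first) cross each other. -/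
def Crossing (p q : ℕ × ℕ) : Prop :=
  (p.1 < q.1 ∧ q.1 < p.2 ∧ p.2 < q.2) ∨ (q.1 < p.1 ∧ p.1 < q.2 ∧ q.2 < p.2)

/-- A triangulation of the convex `n`-gon: a set of `n - 3` pairwise
non-crossing diagonals (equivalently, a maximal non-crossing set of diagonals). -/
def IsTriangulation (n : ℕ) (T : Finset (ℕ × ℕ)) : Prop :=
  (∀ p ∈ T, IsDiagonal n p.1 p.2) ∧
  (∀ p ∈ T, ∀ q ∈ T, ¬ Crossing p q) ∧
  T.card = n - 3
/-- The list of tails (smaller endpoints) of the diagonals of `T`,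
sorted in decreasing order. -/
def tails (T : Finset (ℕ × ℕ)) : List ℕ :=
  (T.val.map Prod.fst).sort (· ≥ ·)

/-- `lam T k` is the `k`-th largest tail `λ_k` of a diagonal of `T`
(`k ≥ 1`; it is `0` if `T` has fewer than `k` diagonals). -/
def lam (T : Finset (ℕ × ℕ)) : ℕ → ℕ :=
  fun k => if k = 0 then 0 else (tails T).getD (k - 1) 0

/-- The partition `f` (with `f k` the length of row `k`, `k ≥ 1`) lies in `Y_n`:
`f k ≤ n - k` for all `k ≥ 1`. -/
def InY (n : ℕ) (f : ℕ → ℕ) : Prop :=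
  f 0 = 0 ∧ (∀ k, 1 ≤ k → f (k + 1) ≤ f k) ∧ (∀ k, 1 ≤ k → f k ≤ n - k)
/-- Two triangulations are related by a flip iff they differ in exactly one diagonal. -/
def FlipRel (A B : Finset (ℕ × ℕ)) : Prop :=
  (A \ B).card = 1 ∧ (B \ A).card = 1
/-- There is an `n`-flip between the Young diagrams `A` and `B`:
the corresponding triangulations of the `(n+2)`-gon under the bijection `Λ_{n+2}`
are related by a flip. -/
def NFlip (n : ℕ) (A B : ℕ → ℕ) : Prop :=
  ∃ T T' : Finset (ℕ × ℕ), IsTriangulation (n + 2) T ∧ IsTriangulation (n + 2) T' ∧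
    lam T = A ∧ lam T' = B ∧ FlipRel T T'

/-!
Adding the diagonal `(0, n + 1)`, whose tail is `0`, turns a triangulation of the `(n + 2)`-gon
into one of the `(n + 3)`-gon with the same diagram, and it commutes with flips. Conversely, a
triangulation `T` of the `(n + 3)`-gon whose diagram lies in `Y_n` contains `(0, n + 1)`.
Otherwise, either no diagonal ends at the last vertex `n + 2`, and then `T ∪ {(0, n + 1)}` would
be `n + 1` noncrossing chords of the `(n + 2)`-gon `0, …, n + 1`; or `(a, n + 2)` is such a
diagonal with least tail `a ≥ 1`: then the diagonals with tail `< a` are noncrossing chords of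
`0, …, a`, at most `a - 1` of them, and since `λ_{n - a + 1} ≤ a - 1` at most `n - a` diagonals
have tail `≥ a`, leaving fewer than `n` diagonals in all.
-/

open scoped Finset

def Noncrossing (S : Finset (ℕ × ℕ)) : Prop :=
  ∀ p ∈ S, ∀ q ∈ S, ¬ Crossing p q

section Chords

variable {S S' : Finset (ℕ × ℕ)}

lemma crossing_irrefl (p : ℕ × ℕ) : ¬ Crossing p p := by
  unfold Crossing; omega

lemma crossing_comm {p q : ℕ × ℕ} : Crossing p q ↔ Crossing q p := by
  unfold Crossing; tauto

lemma Noncrossing.mono (h : Noncrossing S) (hS : S' ⊆ S) : Noncrossing S' :=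
  fun p hp q hq => h p (hS hp) q (hS hq)

lemma Noncrossing.insert {d : ℕ × ℕ} (h : Noncrossing S) (hd : ∀ q ∈ S, ¬ Crossing d q) :
    Noncrossing (insert d S) := by
  simp only [Noncrossing, Finset.mem_insert, forall_eq_or_imp]
  exact ⟨⟨crossing_irrefl d, hd⟩,
    fun p hp => ⟨fun hc => hd p hp (crossing_comm.mp hc), h p hp⟩⟩

lemma not_crossing_zero {c : ℕ} {p : ℕ × ℕ} (hp : p.2 ≤ c) : ¬ Crossing (0, c) p := by
  unfold Crossing; omega

/-- Contracts the chord `(a, b)` to the edge `(a, a + 1)`. -/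
def contract (a b x : ℕ) : ℕ :=
  if x < b then x else x + a + 1 - b

section Contract

variable {a b x y : ℕ}

lemma contract_lt_contract_iff (hab : a < b) (hx : x ≤ a ∨ b ≤ x) (hy : y ≤ a ∨ b ≤ y) :
    contract a b x < contract a b y ↔ x < y := by
  unfold contract; split_ifs <;> omega

lemma contract_inj (hab : a < b) (hx : x ≤ a ∨ b ≤ x) (hy : y ≤ a ∨ b ≤ y) :
    contract a b x = contract a b y ↔ x = y := by
  unfold contract; split_ifs <;> omega

lemma contract_le {M : ℕ} (hx : x ≤ a ∨ b ≤ x) (hb : b ≤ M) (hxM : x ≤ M) :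
    contract a b x ≤ M + a + 1 - b := by
  unfold contract; split_ifs <;> omega

lemma contract_add_two_le (hab : a < b) (hx : x ≤ a ∨ b ≤ x) (hy : y ≤ a ∨ b ≤ y)
    (hxy : x + 2 ≤ y) (hne : ¬ (x = a ∧ y = b)) : contract a b x + 2 ≤ contract a b y := by
  unfold contract; split_ifs <;> omega

lemma crossing_map_contract_iff (hab : a < b) {p q : ℕ × ℕ}
    (hp : (p.1 ≤ a ∨ b ≤ p.1) ∧ (p.2 ≤ a ∨ b ≤ p.2))
    (hq : (q.1 ≤ a ∨ b ≤ q.1) ∧ (q.2 ≤ a ∨ b ≤ q.2)) :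
    Crossing (Prod.map (contract a b) (contract a b) p) (Prod.map (contract a b) (contract a b) q)
      ↔ Crossing p q := by
  simp only [Crossing, Prod.map_fst, Prod.map_snd, contract_lt_contract_iff hab, hp.1, hp.2, hq.1,
    hq.2]

end Contract

lemma endpoints_outside_of_shortest (hS : ∀ p ∈ S, p.1 < p.2) (hnc : Noncrossing S) {a b : ℕ}
    (hab : (a, b) ∈ S) (hmin : ∀ p ∈ S, b - a ≤ p.2 - p.1) :
    ∀ p ∈ S, (p.1 ≤ a ∨ b ≤ p.1) ∧ (p.2 ≤ a ∨ b ≤ p.2) := by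
  intro p hp
  have h1 := hnc p hp (a, b) hab
  have h2 := hnc (a, b) hab p hp
  have := hmin p hp
  have := hS p hp
  have := hS _ hab
  unfold Crossing at h1 h2
  omega

theorem card_le_of_noncrossing (M : ℕ) (S : Finset (ℕ × ℕ))
    (hS : ∀ p ∈ S, p.1 + 2 ≤ p.2 ∧ p.2 ≤ M) (hnc : Noncrossing S) : #S ≤ M - 1 := by
  induction M using Nat.strong_induction_on generalizing S with
  | _ M ih =>
  rcases S.eq_empty_or_nonempty with rfl | hne
  · simp
  obtain ⟨⟨a, b⟩, hab, hmin⟩ := S.exists_min_image (fun p => p.2 - p.1) hne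
  obtain ⟨hab2, hbM⟩ := hS _ hab
  have hout := endpoints_outside_of_shortest (fun p hp => by have := hS p hp; omega) hnc hab hmin
  set c := Prod.map (contract a b) (contract a b)
  have hinj : Set.InjOn c (S.erase (a, b)) := by
    intro p hp q hq hpq
    have hp := hout p (Finset.mem_of_mem_erase hp)
    have hq := hout q (Finset.mem_of_mem_erase hq)
    rw [Prod.ext_iff] at hpq ⊢
    simpa only [c, Prod.map_fst, Prod.map_snd, contract_inj (by omega : a < b), hp.1, hp.2, hq.1,
      hq.2] using hpq
  have hS' : ∀ q ∈ (S.erase (a, b)).image c, q.1 + 2 ≤ q.2 ∧ q.2 ≤ M + a + 1 - b := by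
    simp only [Finset.mem_image, Finset.mem_erase]
    rintro _ ⟨p, ⟨hne, hp⟩, rfl⟩
    obtain ⟨h1, h2⟩ := hout p hp
    refine ⟨contract_add_two_le (by omega) h1 h2 (hS p hp).1 ?_, contract_le h2 hbM (hS p hp).2⟩
    rintro ⟨rfl, rfl⟩
    exact hne rfl
  have hnc' : Noncrossing ((S.erase (a, b)).image c) := by
    simp only [Noncrossing, Finset.mem_image, Finset.mem_erase]
    rintro _ ⟨p, ⟨-, hp⟩, rfl⟩ _ ⟨q, ⟨-, hq⟩, rfl⟩
    rw [crossing_map_contract_iff (by omega) (hout p hp) (hout q hq)]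
    exact hnc p hp q hq
  have := ih (M + a + 1 - b) (by omega) _ hS' hnc'
  rw [Finset.card_image_of_injOn hinj, Finset.card_erase_of_mem hab] at this
  have := Finset.card_pos.mpr hne
  omega

/-- The chords with tail below `q.1` cannot cross `q`, so they are chords of `0, …, q.1`. -/
lemma card_le_fst_sub_one_add_card_filter (hS : ∀ p ∈ S, p.1 + 2 ≤ p.2)
    (hnc : Noncrossing S) {q : ℕ × ℕ} (hq : q ∈ S) (htop : ∀ p ∈ S, p.2 ≤ q.2)
    (hmin : ∀ p ∈ S, p.2 = q.2 → q.1 ≤ p.1) :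
    #S ≤ q.1 - 1 + #{p ∈ S | q.1 ≤ p.1} := by
  have hlow : #{p ∈ S | ¬ q.1 ≤ p.1} ≤ q.1 - 1 := by
    refine card_le_of_noncrossing q.1 _ (fun p hp => ?_) (hnc.mono (Finset.filter_subset _ _))
    obtain ⟨hp, hpq⟩ := Finset.mem_filter.mp hp
    have hc := hnc p hp q hq
    have hlen := hS p hp
    have hle := htop p hp
    have hne : p.2 ≠ q.2 := fun h => hpq (hmin p hp h)
    unfold Crossing at hc
    omega
  have := Finset.card_filter_add_card_filter_not (s := S) (p := fun p => q.1 ≤ p.1)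
  omega

end Chords

section Tails

variable {T : Finset (ℕ × ℕ)}

lemma List.Pairwise.le_getD_of_mem_drop {l : List ℕ} (hl : l.Pairwise (· ≥ ·)) {t x : ℕ}
    (hx : x ∈ l.drop t) : x ≤ l.getD t 0 := by
  obtain ⟨i, hi, rfl⟩ := List.getElem_of_mem hx
  simp only [List.length_drop] at hi
  rw [List.getElem_drop, List.getD_eq_getElem _ _ (by omega)]
  rcases Nat.eq_zero_or_pos i with rfl | hi0
  · simp
  · exact List.pairwise_iff_getElem.mp hl t (t + i) (by omega) (by omega) (by omega)

lemma List.Pairwise.countP_le_le_of_getD_lt {l : List ℕ} (hl : l.Pairwise (· ≥ ·)) {s t : ℕ}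
    (h : l.getD t 0 < s) : l.countP (fun x => s ≤ x) ≤ t := by
  have hdrop : (l.drop t).countP (fun x => s ≤ x) = 0 := by
    rw [List.countP_eq_zero]
    intro x hx
    have := hl.le_getD_of_mem_drop hx
    simp only [decide_eq_true_eq]
    omega
  calc l.countP (fun x => s ≤ x)
      = (l.take t).countP (fun x => s ≤ x) + (l.drop t).countP (fun x => s ≤ x) := by
        rw [← List.countP_append, List.take_append_drop]
    _ ≤ t := by
        rw [hdrop]
        exact (List.countP_le_length).trans (by simp)

lemma card_filter_le_fst_le_of_lam_lt {s t : ℕ} (h : lam T (t + 1) < s) :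
    #{p ∈ T | s ≤ p.1} ≤ t := by
  have hcount : #{p ∈ T | s ≤ p.1} = (tails T).countP (fun x => s ≤ x) := by
    rw [← Multiset.coe_countP, tails, Multiset.sort_eq, Multiset.countP_map]
    rfl
  have hsorted : (tails T).Pairwise (· ≥ ·) := Multiset.pairwise_sort _ _
  rw [hcount]
  exact hsorted.countP_le_le_of_getD_lt (by simpa [lam] using h)

lemma tails_insert_zero {c : ℕ} (h : (0, c) ∉ T) : tails (insert (0, c) T) = tails T ++ [0] := by
  refine List.Perm.eq_of_pairwise' (Multiset.pairwise_sort _ _) ?_ ?_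
  · simp [List.pairwise_append, tails]
  · rw [← Multiset.coe_eq_coe, ← Multiset.coe_add, tails, tails, Multiset.sort_eq,
      Multiset.sort_eq, Finset.insert_val_of_notMem h]
    simp [add_comm]

lemma lam_insert_zero {c : ℕ} (h : (0, c) ∉ T) : lam (insert (0, c) T) = lam T := by
  funext k
  simp only [lam, tails_insert_zero h]
  split_ifs
  · rfl
  · rcases lt_or_ge (k - 1) (tails T).length with hk | hk
    · exact List.getD_append _ _ _ _ hk
    · rw [List.getD_append_right _ _ _ _ hk, List.getD_eq_default _ _ hk]
      grind

end Tails

section Triangulations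

variable {n : ℕ} {T : Finset (ℕ × ℕ)}

lemma IsTriangulation.notMem_zero_last (hT : IsTriangulation (n + 2) T) : (0, n + 1) ∉ T := by
  intro h
  have := hT.1 _ h
  unfold IsDiagonal at this
  omega

lemma isTriangulation_insert_zero_iff (hn : 1 ≤ n) (h : (0, n + 1) ∉ T) :
    IsTriangulation (n + 3) (insert (0, n + 1) T) ↔ IsTriangulation (n + 2) T := by
  have hmem {p : ℕ × ℕ} (hp : p ∈ T) : ¬ (p.1 = 0 ∧ p.2 = n + 1) := fun ⟨h1, h2⟩ =>
    h (by rwa [← h1, ← h2])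
  constructor
  · rintro ⟨hdiag, hnc : Noncrossing _, hcard⟩
    rw [Finset.card_insert_of_notMem h] at hcard
    refine ⟨fun p hp => ?_, hnc.mono (Finset.subset_insert _ _), by omega⟩
    have hd := hdiag p (Finset.mem_insert_of_mem hp)
    have hc := hnc _ (Finset.mem_insert_self _ _) p (Finset.mem_insert_of_mem hp)
    have := hmem hp
    unfold IsDiagonal at hd ⊢
    unfold Crossing at hc
    omega
  · rintro ⟨hdiag, hnc : Noncrossing _, hcard⟩
    have hcard' := Finset.card_insert_of_notMem h
    refine ⟨fun p hp => ?_, hnc.insert fun q hq => ?_, by omega⟩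
    · rcases Finset.mem_insert.mp hp with rfl | hp
      · unfold IsDiagonal; omega
      · have := hdiag p hp
        unfold IsDiagonal at this ⊢
        omega
    · have := hdiag q hq
      unfold IsDiagonal at this
      exact not_crossing_zero (by omega)

lemma IsTriangulation.zero_last_mem_of_inY (hn : 1 ≤ n) (hT : IsTriangulation (n + 3) T)
    (hA : InY n (lam T)) : (0, n + 1) ∈ T := by
  obtain ⟨hdiag, hnc : Noncrossing T, hcard⟩ := hT
  by_contra h
  by_cases htop : ∃ p ∈ T, p.2 = n + 2
  · obtain ⟨q, hq, hqmin⟩ := (T.filter (·.2 = n + 2)).exists_min_image Prod.fst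
      (by obtain ⟨p, hp, hp2⟩ := htop; exact ⟨p, Finset.mem_filter.mpr ⟨hp, hp2⟩⟩)
    obtain ⟨hq, hq2⟩ := Finset.mem_filter.mp hq
    have hqd := hdiag q hq
    unfold IsDiagonal at hqd
    have hhigh : #{p ∈ T | q.1 ≤ p.1} ≤ n - q.1 :=
      card_filter_le_fst_le_of_lam_lt (by have := hA.2.2 (n - q.1 + 1) (by omega); omega)
    have := card_le_fst_sub_one_add_card_filter (fun p hp => (hdiag p hp).1) hnc hq
      (fun p hp => by have := hdiag p hp; unfold IsDiagonal at this; omega)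
      (fun p hp hp2 => hqmin p (Finset.mem_filter.mpr ⟨hp, hp2.trans hq2⟩))
    omega
  · push Not at htop
    have hhead : ∀ p ∈ T, p.2 ≤ n + 1 := fun p hp => by
      have := hdiag p hp; have := htop p hp; unfold IsDiagonal at *; omega
    have := card_le_of_noncrossing (n + 1) (insert (0, n + 1) T) ?_
      (hnc.insert fun p hp => not_crossing_zero (hhead p hp))
    · rw [Finset.card_insert_of_notMem h] at this
      omega
    · intro p hp
      rcases Finset.mem_insert.mp hp with rfl | hp
      · omega
      · exact ⟨(hdiag p hp).1, hhead p hp⟩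

lemma IsTriangulation.exists_eq_insert_of_inY (hn : 1 ≤ n) (hT : IsTriangulation (n + 3) T)
    (hA : InY n (lam T)) :
    ∃ T₀, (0, n + 1) ∉ T₀ ∧ IsTriangulation (n + 2) T₀ ∧ lam T₀ = lam T ∧
      T = insert (0, n + 1) T₀ := by
  have hmem := hT.zero_last_mem_of_inY hn hA
  have hT₀ : T = insert (0, n + 1) (T.erase (0, n + 1)) := (Finset.insert_erase hmem).symm
  have hnot := Finset.notMem_erase (0, n + 1) T
  refine ⟨T.erase (0, n + 1), hnot, ?_, ?_, hT₀⟩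
  · rw [← isTriangulation_insert_zero_iff hn hnot, ← hT₀]
    exact hT
  · rw [← lam_insert_zero hnot, ← hT₀]

end Triangulations

lemma flipRel_insert_iff {d : ℕ × ℕ} {U V : Finset (ℕ × ℕ)} (hU : d ∉ U) (hV : d ∉ V) :
    FlipRel (insert d U) (insert d V) ↔ FlipRel U V := by
  simp only [FlipRel, Finset.insert_sdiff_insert, Finset.sdiff_insert_of_notMem hU,
    Finset.sdiff_insert_of_notMem hV]

lemma InY.mono {n m : ℕ} {A : ℕ → ℕ} (hA : InY n A) (h : n ≤ m) : InY m A :=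
  ⟨hA.1, hA.2.1, fun k hk => (hA.2.2 k hk).trans (by omega)⟩

section NFlip

variable {n : ℕ} {A B : ℕ → ℕ}

lemma NFlip.two_le (h : NFlip n A B) : 2 ≤ n := by
  obtain ⟨T, T', hT, -, -, -, hF, -⟩ := h
  have := Finset.card_le_card (Finset.sdiff_subset : T \ T' ⊆ T)
  have := hT.2.2
  omega

lemma nflip_iff_nflip_succ (hA : InY n A) (hB : InY n B) : NFlip n A B ↔ NFlip (n + 1) A B := by
  constructor
  · intro h
    have hn : 1 ≤ n := by have := h.two_le; omega
    obtain ⟨T, T', hT, hT', rfl, rfl, hF⟩ := h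
    have h₀ := hT.notMem_zero_last
    have h₀' := hT'.notMem_zero_last
    exact ⟨_, _, (isTriangulation_insert_zero_iff hn h₀).2 hT,
      (isTriangulation_insert_zero_iff hn h₀').2 hT', lam_insert_zero h₀, lam_insert_zero h₀',
      (flipRel_insert_iff h₀ h₀').2 hF⟩
  · intro h
    have hn : 1 ≤ n := by have := h.two_le; omega
    obtain ⟨T, T', hT, hT', rfl, rfl, hF⟩ := h
    obtain ⟨T₀, h₀, hT₀, hl, rfl⟩ := hT.exists_eq_insert_of_inY hn hA
    obtain ⟨T₀', h₀', hT₀', hl', rfl⟩ := hT'.exists_eq_insert_of_inY hn hB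
    exact ⟨T₀, T₀', hT₀, hT₀', hl, hl', (flipRel_insert_iff h₀ h₀').1 hF⟩

lemma nflip_iff_nflip_add (hA : InY n A) (hB : InY n B) (d : ℕ) :
    NFlip n A B ↔ NFlip (n + d) A B := by
  induction d with
  | zero => rfl
  | succ d ih =>
    rw [ih, ← add_assoc]
    exact nflip_iff_nflip_succ (hA.mono (by omega)) (hB.mono (by omega))

end NFlip

/-- The existence of an `m`-flip between two Young diagrams is independent of `m`:
if `A, B` lie both in `Y_n` and both in `Y_k`, then there is an `n`-flip between
them if and only if there is a `k`-flip between them. -/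
theorem nflip_independent (n k : ℕ) (A B : ℕ → ℕ)
    (hAn : InY n A) (hBn : InY n B) (hAk : InY k A) (hBk : InY k B) :
    NFlip n A B ↔ NFlip k A B := by
  wlog h : n ≤ k generalizing n k
  · exact (this k n hAk hBk hAn hBn (by omega)).symm
  obtain ⟨d, rfl⟩ := Nat.exists_eq_add_of_le h
  exact nflip_iff_nflip_add hAn hBn d
end

section
/- Let D = (d_1, d_2, ...) be a Young diagram in Y_n and consider the k-th diagonal of the triangulation Λ_{n+2}^{-1}(D) (diagonals ordered so that diagonal k has tail d_k). Then its head equals l_k = 1 + k + d_k - max({m : m < k and m + d_m > k + d_k} ∪ {0}). -/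
/-- The position of the diagonal `p` in the ordering of diagonals of `T`:
`(a,b)` precedes `(c,d)` iff `a > c`, or `a = c` and `b < d`.  The diagonal of
position (number) `k` has tail `λ_k`. -/
def diagPos (T : Finset (ℕ × ℕ)) (p : ℕ × ℕ) : ℕ :=
  (T.filter (fun q => p.1 < q.1 ∨ (q.1 = p.1 ∧ q.2 < p.2))).card + 1

/-- `headFormula d k = 1 + k + d_k - max({m : m < k, m + d_m > k + d_k} ∪ {0})`. -/
def headFormula (d : ℕ → ℕ) (k : ℕ) : ℕ :=
  1 + (k + d k -
    (insert 0 ((Finset.Ico 1 k).filter (fun m => k + d k < m + d m))).max'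
      (Finset.insert_nonempty 0 _))

/-!
The diagonals under `p = (a, b)`, i.e. those with both endpoints in `[a, b]`, triangulate the
polygon `a, a + 1, …, b`, so there are `b - a - 1` of them, `p` included. Hence the diagonals
preceding `p` are the other diagonals under `p` together with the `S` diagonals with tail at least
`b`: this gives `k + a + 1 = b + S` and `d_k = a`, so it remains to see that the maximum in the
formula is `S`. The diagonal number `S` has tail at least `b`, so `S` belongs to the set. For
`S < m < k` the tail `t = d_m` lies strictly between `a` and `b`, and the diagonals with tail in
`[t, b)` lie under `p`, so there are at most `b - t - 1` of them; hence `m + t ≤ k + a`.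
All counting rests on the bound `N - 3` for the number of pairwise non-crossing chords of a convex
`N`-gon.
-/

open Finset

/-- `p = (a, b)` with `a < b` is a chord of the convex polygon whose vertices are the points of
`V` in increasing order: its endpoints are vertices and it separates two vertices. -/
def IsChord (V : Finset ℕ) (p : ℕ × ℕ) : Prop :=
  p.1 ∈ V ∧ p.2 ∈ V ∧ (∃ v ∈ V, p.1 < v ∧ v < p.2) ∧ (∃ w ∈ V, w < p.1 ∨ p.2 < w)

def NonCrossing (F : Finset (ℕ × ℕ)) : Prop :=
  ∀ p ∈ F, ∀ q ∈ F, ¬ Crossing p q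

theorem NonCrossing.mono {F G : Finset (ℕ × ℕ)} (hF : NonCrossing F) (hGF : G ⊆ F) :
    NonCrossing G :=
  fun p hp q hq => hF p (hGF hp) q (hGF hq)

def innerVertices (V : Finset ℕ) (p : ℕ × ℕ) : Finset ℕ :=
  V.filter fun x => p.1 ≤ x ∧ x ≤ p.2

def outerVertices (V : Finset ℕ) (p : ℕ × ℕ) : Finset ℕ :=
  V.filter fun x => x ≤ p.1 ∨ p.2 ≤ x

theorem card_innerVertices_add_card_outerVertices {V : Finset ℕ} {p : ℕ × ℕ} (h1 : p.1 ∈ V)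
    (h2 : p.2 ∈ V) (h : p.1 < p.2) :
    #(innerVertices V p) + #(outerVertices V p) = #V + 2 := by
  have hunion : innerVertices V p ∪ outerVertices V p = V := by
    ext x
    simp only [innerVertices, outerVertices, mem_union, mem_filter]
    constructor
    · rintro (hx | hx) <;> exact hx.1
    · intro hx
      by_cases hc : p.1 ≤ x ∧ x ≤ p.2
      · exact .inl ⟨hx, hc⟩
      · exact .inr ⟨hx, by omega⟩
  have hinter : innerVertices V p ∩ outerVertices V p = {p.1, p.2} := by
    ext x
    simp only [innerVertices, outerVertices, mem_inter, mem_filter, mem_insert, mem_singleton]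
    constructor
    · rintro ⟨⟨-, hx⟩, -, hx'⟩
      omega
    · rintro (rfl | rfl)
      · exact ⟨⟨h1, le_rfl, h.le⟩, h1, .inl le_rfl⟩
      · exact ⟨⟨h2, h.le, le_rfl⟩, h2, .inr le_rfl⟩
  have := card_union_add_card_inter (innerVertices V p) (outerVertices V p)
  rw [hunion, hinter, card_pair h.ne] at this
  omega

theorem IsChord.inner {V : Finset ℕ} {p q : ℕ × ℕ} (hq : IsChord V q) (hp : IsChord V p)
    (hqp : q ≠ p) (hin : p.1 ≤ q.1 ∧ q.2 ≤ p.2) : IsChord (innerVertices V p) q := by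
  obtain ⟨hq1, hq2, ⟨v, hv, hv1, hv2⟩, -⟩ := hq
  obtain ⟨hp1, hp2, -, -⟩ := hp
  have hne : q.1 ≠ p.1 ∨ q.2 ≠ p.2 := by
    by_contra! h
    exact hqp (Prod.ext h.1 h.2)
  refine ⟨mem_filter.2 ⟨hq1, by omega⟩, mem_filter.2 ⟨hq2, by omega⟩,
    ⟨v, mem_filter.2 ⟨hv, by omega⟩, hv1, hv2⟩, ?_⟩
  by_cases hc : p.1 < q.1
  · exact ⟨p.1, mem_filter.2 ⟨hp1, by omega⟩, .inl hc⟩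
  · exact ⟨p.2, mem_filter.2 ⟨hp2, by omega⟩, .inr (by omega)⟩

theorem IsChord.outer {V : Finset ℕ} {p q : ℕ × ℕ} (hq : IsChord V q) (hp : IsChord V p)
    (hpq : ¬ Crossing p q) (hout : ¬ (p.1 ≤ q.1 ∧ q.2 ≤ p.2)) :
    IsChord (outerVertices V p) q := by
  obtain ⟨hq1, hq2, ⟨v, hv, hv1, hv2⟩, ⟨w, hw, hw'⟩⟩ := hq
  obtain ⟨hp1, hp2, -, -⟩ := hp
  have hmem : ∀ x ∈ V, x ≤ p.1 ∨ p.2 ≤ x → x ∈ outerVertices V p :=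
    fun x hx h => mem_filter.2 ⟨hx, h⟩
  have hp1o := hmem _ hp1 (.inl le_rfl)
  have hp2o := hmem _ hp2 (.inr le_rfl)
  unfold Crossing at hpq
  refine ⟨hmem _ hq1 (by omega), hmem _ hq2 (by omega), ?_, ?_⟩
  · by_cases hvo : v ≤ p.1 ∨ p.2 ≤ v
    · exact ⟨v, hmem _ hv hvo, hv1, hv2⟩
    by_cases hc : q.1 < p.1
    · exact ⟨p.1, hp1o, hc, by omega⟩
    · exact ⟨p.2, hp2o, by omega, by omega⟩
  · by_cases hwo : w ≤ p.1 ∨ p.2 ≤ w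
    · exact ⟨w, hmem _ hw hwo, hw'⟩
    by_cases hc : w < q.1
    · exact ⟨p.1, hp1o, .inl (by omega)⟩
    · exact ⟨p.2, hp2o, .inr (by omega)⟩

/-- Cutting along one chord splits the polygon into two smaller polygons sharing the chord as an
edge, and every other chord lies in one of them. -/
theorem NonCrossing.card_le_card_sub_three {F : Finset (ℕ × ℕ)} {V : Finset ℕ}
    (hF : NonCrossing F) (hch : ∀ q ∈ F, IsChord V q) : #F ≤ #V - 3 := by
  induction hN : #V using Nat.strong_induction_on generalizing V F with
  | _ N ih =>
  subst hN
  obtain rfl | ⟨p, hpF⟩ := F.eq_empty_or_nonempty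
  · simp
  have hp := hch p hpF
  obtain ⟨ha, hb, ⟨v, hv, hav, hvb⟩, ⟨w, hw, hw'⟩⟩ := id hp
  have hin_lt : #(innerVertices V p) < #V := card_lt_card (filter_ssubset.2 ⟨w, hw, by omega⟩)
  have hout_lt : #(outerVertices V p) < #V := card_lt_card (filter_ssubset.2 ⟨v, hv, by omega⟩)
  have hin : #((F.filter fun q => p.1 ≤ q.1 ∧ q.2 ≤ p.2).erase p) ≤ #(innerVertices V p) - 3 :=
    ih _ hin_lt (hF.mono ((erase_subset _ _).trans (filter_subset _ _)))
      (fun q hq => by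
        obtain ⟨hqp, hq⟩ := mem_erase.1 hq
        obtain ⟨hq, hqin⟩ := mem_filter.1 hq
        exact (hch q hq).inner hp hqp hqin) rfl
  have hout : #(F.filter fun q => ¬ (p.1 ≤ q.1 ∧ q.2 ≤ p.2)) ≤ #(outerVertices V p) - 3 :=
    ih _ hout_lt (hF.mono (filter_subset _ _))
      (fun q hq => by
        obtain ⟨hq, hqout⟩ := mem_filter.1 hq
        exact (hch q hq).outer hp (hF p hpF q hq) hqout) rfl
  have := card_erase_add_one (mem_filter.2 ⟨hpF, le_rfl, le_rfl⟩ :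
    p ∈ F.filter fun q => p.1 ≤ q.1 ∧ q.2 ≤ p.2)
  have := card_filter_add_card_filter_not (s := F) (fun q => p.1 ≤ q.1 ∧ q.2 ≤ p.2)
  have := card_innerVertices_add_card_outerVertices ha hb (hav.trans hvb)
  omega

theorem List.Pairwise.le_getElem_iff_lt_countP {α : Type*} [LinearOrder α] {L : List α}
    (hL : L.Pairwise (· ≥ ·)) (c : α) {i : ℕ} (hi : i < L.length) :
    c ≤ L[i] ↔ i < L.countP (fun x => c ≤ x) := by
  induction L generalizing i with
  | nil => simp at hi
  | cons x t ih =>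
    rw [List.pairwise_cons] at hL
    by_cases hcx : c ≤ x
    · cases i with
      | zero => simp [hcx]
      | succ i => simp [hcx, ih hL.2 (by simpa using hi)]
    · have hlt : ∀ y ∈ x :: t, y < c := by
        intro y hy
        rcases List.mem_cons.1 hy with rfl | hy
        · exact not_le.1 hcx
        · exact (hL.1 y hy).trans_lt (not_le.1 hcx)
      have hcount : (x :: t).countP (fun x => c ≤ x) = 0 :=
        List.countP_eq_zero.2 fun y hy => by simpa using hlt y hy
      simp [hcount, hlt _ (List.getElem_mem hi)]

theorem countP_tails (T : Finset (ℕ × ℕ)) (c : ℕ) :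
    (tails T).countP (fun x => c ≤ x) = #(T.filter fun q => c ≤ q.1) := by
  rw [← Multiset.coe_countP, tails, Multiset.sort_eq, Multiset.countP_map]
  rfl

theorem length_tails (T : Finset (ℕ × ℕ)) : (tails T).length = #T := by
  rw [tails, Multiset.length_sort, Multiset.card_map]
  rfl

theorem le_lam_iff {T : Finset (ℕ × ℕ)} {m : ℕ} (hm : 1 ≤ m) (hmT : m ≤ #T) (c : ℕ) :
    c ≤ lam T m ↔ m ≤ #(T.filter fun q => c ≤ q.1) := by
  have hi : m - 1 < (tails T).length := by rw [length_tails]; omega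
  have hsorted : (tails T).Pairwise (· ≥ ·) := Multiset.pairwise_sort _ _
  rw [lam, if_neg (by omega), List.getD_eq_getElem _ _ hi,
    hsorted.le_getElem_iff_lt_countP c hi, countP_tails]
  omega

theorem diagPos_le_card_filter {T : Finset (ℕ × ℕ)} {p : ℕ × ℕ} (hp : p ∈ T) :
    diagPos T p ≤ #(T.filter fun q => p.1 ≤ q.1) := by
  have hsub : (T.filter fun q => p.1 < q.1 ∨ (q.1 = p.1 ∧ q.2 < p.2))
      ⊆ (T.filter fun q => p.1 ≤ q.1).erase p := by
    intro q hq
    obtain ⟨hq, hqp⟩ := mem_filter.1 hq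
    refine mem_erase.2 ⟨?_, mem_filter.2 ⟨hq, by omega⟩⟩
    rintro rfl
    omega
  have := card_le_card hsub
  have := card_erase_add_one (mem_filter.2 ⟨hp, le_rfl⟩ : p ∈ T.filter fun q => p.1 ≤ q.1)
  unfold diagPos
  omega

theorem card_filter_lt_diagPos (T : Finset (ℕ × ℕ)) (p : ℕ × ℕ) :
    #(T.filter fun q => p.1 + 1 ≤ q.1) < diagPos T p := by
  have hsub : (T.filter fun q => p.1 + 1 ≤ q.1)
      ⊆ T.filter fun q => p.1 < q.1 ∨ (q.1 = p.1 ∧ q.2 < p.2) :=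
    monotone_filter_right _ fun q _ hq => .inl hq
  exact Nat.lt_succ_of_le (card_le_card hsub)

theorem lam_diagPos {T : Finset (ℕ × ℕ)} {p : ℕ × ℕ} (hp : p ∈ T) : lam T (diagPos T p) = p.1 := by
  have hpos : 1 ≤ diagPos T p := Nat.le_add_left _ _
  have hle := diagPos_le_card_filter hp
  have hT : diagPos T p ≤ #T := hle.trans (card_filter_le _ _)
  have hge : p.1 ≤ lam T (diagPos T p) := (le_lam_iff hpos hT _).2 hle
  have hlt : ¬ p.1 + 1 ≤ lam T (diagPos T p) :=
    fun h => (card_filter_lt_diagPos T p).not_ge ((le_lam_iff hpos hT _).1 h)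
  omega

theorem NonCrossing.card_filter_le {F : Finset (ℕ × ℕ)} (hF : NonCrossing F)
    (hlen : ∀ q ∈ F, q.1 + 2 ≤ q.2) (s t : ℕ) :
    #(F.filter fun q => s ≤ q.1 ∧ q.2 ≤ t) ≤ t - s - 1 := by
  have hch : ∀ q ∈ (F.filter fun q => s ≤ q.1 ∧ q.2 ≤ t).erase (s, t), IsChord (Icc s t) q := by
    intro q hq
    obtain ⟨hqst, hq⟩ := mem_erase.1 hq
    obtain ⟨hqF, hsq, hqt⟩ := mem_filter.1 hq
    have hq12 := hlen q hqF
    have hne : q.1 ≠ s ∨ q.2 ≠ t := by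
      by_contra! h
      exact hqst (Prod.ext h.1 h.2)
    refine ⟨mem_Icc.2 ⟨hsq, by omega⟩, mem_Icc.2 ⟨by omega, hqt⟩,
      ⟨q.1 + 1, mem_Icc.2 ⟨by omega, by omega⟩, by omega, by omega⟩, ?_⟩
    by_cases hc : s < q.1
    · exact ⟨s, mem_Icc.2 ⟨le_rfl, by omega⟩, .inl hc⟩
    · exact ⟨t, mem_Icc.2 ⟨by omega, le_rfl⟩, .inr (by omega)⟩
  have hbound := (hF.mono ((erase_subset _ _).trans (filter_subset _ _))).card_le_card_sub_three hch
  rw [Nat.card_Icc] at hbound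
  obtain hempty | ⟨q, hq⟩ := (F.filter fun q => s ≤ q.1 ∧ q.2 ≤ t).eq_empty_or_nonempty
  · simp [hempty]
  have := hlen q (mem_filter.1 hq).1
  have := (mem_filter.1 hq).2
  have := pred_card_le_card_erase (s := F.filter fun q => s ≤ q.1 ∧ q.2 ≤ t) (a := (s, t))
  omega

namespace IsTriangulation

variable {n : ℕ} {T : Finset (ℕ × ℕ)}

theorem nonCrossing (hT : IsTriangulation (n + 2) T) : NonCrossing T := hT.2.1

theorem add_two_le (hT : IsTriangulation (n + 2) T) {q : ℕ × ℕ} (hq : q ∈ T) : q.1 + 2 ≤ q.2 :=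
  (hT.1 q hq).1

theorem isChord (hT : IsTriangulation (n + 2) T) {q : ℕ × ℕ} (hq : q ∈ T) :
    IsChord (range (n + 2)) q := by
  obtain ⟨h12, h2n, h0n⟩ := hT.1 q hq
  refine ⟨mem_range.2 (by omega), mem_range.2 (by omega),
    ⟨q.1 + 1, mem_range.2 (by omega), by omega, by omega⟩, ?_⟩
  by_cases h0 : q.1 = 0
  · exact ⟨n + 1, mem_range.2 (by omega), .inr (by omega)⟩
  · exact ⟨0, mem_range.2 (by omega), .inl (by omega)⟩

/-- The diagonals not under `p` are chords of the complementary polygon; bounding both families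
and comparing with `#T` forces equality. -/
theorem card_filter_inside (hT : IsTriangulation (n + 2) T) {p : ℕ × ℕ} (hp : p ∈ T) :
    #(T.filter fun q => p.1 ≤ q.1 ∧ q.2 ≤ p.2) = p.2 - p.1 - 1 := by
  have hle := hT.nonCrossing.card_filter_le (fun q => hT.add_two_le) p.1 p.2
  have hout : #(T.filter fun q => ¬ (p.1 ≤ q.1 ∧ q.2 ≤ p.2))
      ≤ #(outerVertices (range (n + 2)) p) - 3 :=
    (hT.nonCrossing.mono (filter_subset _ _)).card_le_card_sub_three fun q hq => by
      obtain ⟨hq, hqout⟩ := mem_filter.1 hq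
      exact (hT.isChord hq).outer (hT.isChord hp) (hT.nonCrossing p hp q hq) hqout
  obtain ⟨hp1, hp2, -, -⟩ := hT.isChord hp
  obtain ⟨hp12, hp2n, hp0n⟩ := hT.1 p hp
  have hsum := card_innerVertices_add_card_outerVertices hp1 hp2 (by omega)
  have hinner : innerVertices (range (n + 2)) p = Icc p.1 p.2 := by
    ext x
    simp only [innerVertices, mem_filter, mem_range, mem_Icc]
    omega
  rw [hinner, Nat.card_Icc, card_range] at hsum
  have := card_filter_add_card_filter_not (s := T) (fun q => p.1 ≤ q.1 ∧ q.2 ≤ p.2)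
  have := hT.2.2
  omega

theorem card_filter_tail_le (hT : IsTriangulation (n + 2) T) {p : ℕ × ℕ} (hp : p ∈ T) {t : ℕ}
    (hpt : p.1 < t) (htp : t < p.2) :
    #(T.filter fun q => t ≤ q.1) + t + 1 ≤ p.2 + #(T.filter fun q => p.2 ≤ q.1) := by
  have hsub : (T.filter fun q => t ≤ q.1)
      ⊆ (T.filter fun q => t ≤ q.1 ∧ q.2 ≤ p.2) ∪ T.filter fun q => p.2 ≤ q.1 := by
    intro q hq
    obtain ⟨hq, htq⟩ := mem_filter.1 hq
    have hpq := hT.nonCrossing p hp q hq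
    unfold Crossing at hpq
    simp only [mem_union, mem_filter, hq, true_and]
    omega
  have := (card_le_card hsub).trans (card_union_le _ _)
  have := hT.nonCrossing.card_filter_le (fun q => hT.add_two_le) t p.2
  omega

/-- The diagonals preceding `p` are those under `p` and those with tail at least `p.2`. -/
theorem diagPos_add (hT : IsTriangulation (n + 2) T) {p : ℕ × ℕ} (hp : p ∈ T) :
    diagPos T p + p.1 + 1 = p.2 + #(T.filter fun q => p.2 ≤ q.1) := by
  have heq : (T.filter fun q => p.1 < q.1 ∨ (q.1 = p.1 ∧ q.2 < p.2))
      = (T.filter fun q => p.1 ≤ q.1 ∧ q.2 ≤ p.2).erase p ∪ T.filter fun q => p.2 ≤ q.1 := by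
    ext q
    by_cases hq : q ∈ T
    · have hpq := hT.nonCrossing p hp q hq
      have := hT.add_two_le hq
      have := hT.add_two_le hp
      unfold Crossing at hpq
      simp only [mem_filter, mem_union, mem_erase, hq, true_and, ne_eq, Prod.ext_iff]
      omega
    · simp [hq]
  have hdisj : Disjoint ((T.filter fun q => p.1 ≤ q.1 ∧ q.2 ≤ p.2).erase p)
      (T.filter fun q => p.2 ≤ q.1) := by
    refine disjoint_left.2 fun q hq hq' => ?_
    have := hT.add_two_le (mem_filter.1 hq').1
    have := (mem_filter.1 (mem_of_mem_erase hq)).2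
    have := (mem_filter.1 hq').2
    omega
  have := card_union_of_disjoint hdisj
  have := card_erase_add_one (mem_filter.2 ⟨hp, le_rfl, le_rfl⟩ :
    p ∈ T.filter fun q => p.1 ≤ q.1 ∧ q.2 ≤ p.2)
  have := hT.card_filter_inside hp
  have := hT.add_two_le hp
  unfold diagPos
  rw [heq]
  omega

theorem le_card_filter_of_lt_add (hT : IsTriangulation (n + 2) T) {p : ℕ × ℕ} (hp : p ∈ T)
    {m : ℕ} (hm : 1 ≤ m) (hmp : m < diagPos T p)
    (h : diagPos T p + lam T (diagPos T p) < m + lam T m) :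
    m ≤ #(T.filter fun q => p.2 ≤ q.1) := by
  rw [lam_diagPos hp] at h
  by_contra! hpm
  have hpT := diagPos_le_card_filter hp
  have hmT : m ≤ #T := by have := card_filter_le T fun q => p.1 ≤ q.1; omega
  have hpt : p.1 ≤ lam T m := (le_lam_iff hm hmT _).2 (by omega)
  have htp : lam T m < p.2 :=
    lt_of_not_ge fun h' => by have := (le_lam_iff hm hmT _).1 h'; omega
  have htm : m ≤ #(T.filter fun q => lam T m ≤ q.1) := (le_lam_iff hm hmT _).1 le_rfl
  have := hT.card_filter_tail_le hp (t := lam T m) (by omega) htp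
  have := hT.diagPos_add hp
  omega

theorem max'_eq_card_filter (hT : IsTriangulation (n + 2) T) {p : ℕ × ℕ} (hp : p ∈ T) :
    (insert 0 ((Ico 1 (diagPos T p)).filter fun m =>
      diagPos T p + lam T (diagPos T p) < m + lam T m)).max' (insert_nonempty 0 _)
      = #(T.filter fun q => p.2 ≤ q.1) := by
  apply le_antisymm
  · refine max'_le _ _ _ fun m hm => ?_
    obtain rfl | hm := mem_insert.1 hm
    · exact Nat.zero_le _
    obtain ⟨hm, hlt⟩ := mem_filter.1 hm
    obtain ⟨hm1, hmp⟩ := mem_Ico.1 hm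
    exact hT.le_card_filter_of_lt_add hp hm1 hmp hlt
  obtain h0 | hpos := Nat.eq_zero_or_pos #(T.filter fun q => p.2 ≤ q.1)
  · rw [h0]
    exact Nat.zero_le _
  refine le_max' _ _ (mem_insert_of_mem (mem_filter.2 ⟨mem_Ico.2 ⟨hpos, ?_⟩, ?_⟩))
  · have := hT.diagPos_add hp
    have := hT.add_two_le hp
    omega
  · have hST : #(T.filter fun q => p.2 ≤ q.1) ≤ #T := card_filter_le _ _
    have := (le_lam_iff hpos hST p.2).2 le_rfl
    have := hT.diagPos_add hp
    rw [lam_diagPos hp]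
    omega

end IsTriangulation

/-- For a Young diagram `D ∈ Y_n` with rows `d`, the head of the `k`-th diagonal
of the triangulation `Λ_{n+2}⁻¹(D)` equals
`1 + k + d_k - max({m : m < k, m + d_m > k + d_k} ∪ {0})`. -/
theorem head_of_kth_diagonal (n : ℕ) (T : Finset (ℕ × ℕ))
    (hT : IsTriangulation (n + 2) T) (d : ℕ → ℕ) (hd : lam T = d)
    (p : ℕ × ℕ) (hp : p ∈ T) (k : ℕ) (hk : diagPos T p = k) :
    p.2 = headFormula d k := by
  subst hd hk
  have := hT.diagPos_add hp
  have := hT.add_two_le hp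
  rw [headFormula, hT.max'_eq_card_filter hp, lam_diagPos hp]
  omega
end
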